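/- Let f be a non-degenerate harmonic mapping on the Riemann sphere with poles z_1, …, z_m and critical set 𝒞. Then 𝒞 and the caustics f(𝒞) are compact subsets of ℂ; in particular, no pole z_j is an accumulation point of 𝒞. -/

import Mathlib

open Filter Metric Set Topology

noncomputable section

/-- The Wirtinger derivative ∂f = (1/2)(∂f/∂x − i ∂f/∂y). -/
def wDz (f : ℂ → ℂ) (z : ℂ) : ℂ :=
  (fderiv ℝ f z 1 - Complex.I * fderiv ℝ f z Complex.I) / 2

/-- The Wirtinger derivative ∂̄f = (1/2)(∂f/∂x + i ∂f/∂y). -/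
def wDzbar (f : ℂ → ℂ) (z : ℂ) : ℂ :=
  (fderiv ℝ f z 1 + Complex.I * fderiv ℝ f z Complex.I) / 2

/-- A harmonic mapping on an open set: locally `f = h + conj ∘ g` with `h`, `g` holomorphic. -/
def IsHarmonicMappingOn (f : ℂ → ℂ) (Ω : Set ℂ) : Prop :=
  ∀ z ∈ Ω, ∃ ε > 0, Metric.ball z ε ⊆ Ω ∧ ∃ h g : ℂ → ℂ,
    DifferentiableOn ℂ h (Metric.ball z ε) ∧ DifferentiableOn ℂ g (Metric.ball z ε) ∧
    ∀ w ∈ Metric.ball z ε, f w = h w + (starRingEnd ℂ) (g w)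

/-- The harmonic Newton map of `f − η`. -/
def newtonMap (f : ℂ → ℂ) (η : ℂ) (z : ℂ) : ℂ :=
  z - ((starRingEnd ℂ) (wDz f z) * (f z - η) - wDzbar f z * (starRingEnd ℂ) (f z - η)) /
      ((((‖wDz f z‖) ^ 2 - (‖wDzbar f z‖) ^ 2 : ℝ)) : ℂ)

/-- `zstar` attracts `s` under the harmonic Newton map of `f − η`. -/
def NewtonAttracts (f : ℂ → ℂ) (η : ℂ) (s zstar : ℂ) : Prop :=
  Filter.Tendsto (fun k => (newtonMap f η)^[k] s) Filter.atTop (nhds zstar)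

/-- Limit of the harmonic Newton iteration started at `s`. -/
def newtonLim (f : ℂ → ℂ) (η : ℂ) (s : ℂ) : ℂ :=
  limUnder Filter.atTop (fun k => (newtonMap f η)^[k] s)

/-- `S` is a (minimal) prediction set for the solution set `Z` of `f(z) = η`. -/
def IsPredSet (f : ℂ → ℂ) (η : ℂ) (S Z : Set ℂ) : Prop :=
  S.Finite ∧ Z.Finite ∧ S.ncard = Z.ncard ∧
    ∀ z ∈ Z, ∃! s, s ∈ S ∧ NewtonAttracts f η s z

/-- A non-degenerate harmonic mapping on the Riemann sphere. -/
structure NondegenHM where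
  m : ℕ
  pole : Fin m → ℂ
  pole_inj : Function.Injective pole
  f : ℂ → ℂ
  r : RatFunc ℂ
  s : RatFunc ℂ
  A : Fin m → ℂ
  r_poles : ∀ w : ℂ, (RatFunc.denom r).eval w = 0 → ∃ j, w = pole j
  s_poles : ∀ w : ℂ, (RatFunc.denom s).eval w = 0 → ∃ j, w = pole j
  f_eq : ∀ z : ℂ, (∀ j, z ≠ pole j) →
    f z = r.eval (RingHom.id ℂ) z + (starRingEnd ℂ) (s.eval (RingHom.id ℂ) z)
      + ∑ j, 2 * A j * ((Real.log (‖z - pole j‖) : ℝ) : ℂ)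
  pole_cond : ∀ j, ∃ n : ℕ, 1 ≤ n ∧ ∃ a b : ℂ, ‖a‖ ≠ ‖b‖ ∧
    Filter.Tendsto (fun z : ℂ => (z - pole j) ^ n * r.eval (RingHom.id ℂ) z)
      (nhdsWithin (pole j) {pole j}ᶜ) (nhds a) ∧
    Filter.Tendsto (fun z : ℂ => (z - pole j) ^ n * s.eval (RingHom.id ℂ) z)
      (nhdsWithin (pole j) {pole j}ᶜ) (nhds b)
  infty_cond :
    (∃ n : ℕ, 1 ≤ n ∧ ∃ a b : ℂ, ‖a‖ ≠ ‖b‖ ∧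
      Filter.Tendsto (fun z : ℂ => r.eval (RingHom.id ℂ) z / z ^ n)
        (Bornology.cobounded ℂ) (nhds a) ∧
      Filter.Tendsto (fun z : ℂ => s.eval (RingHom.id ℂ) z / z ^ n)
        (Bornology.cobounded ℂ) (nhds b)) ∨
    ((∃ C : ℝ, ∀ᶠ z : ℂ in Bornology.cobounded ℂ, ‖r.eval (RingHom.id ℂ) z‖ ≤ C) ∧
     (∃ C : ℝ, ∀ᶠ z : ℂ in Bornology.cobounded ℂ, ‖s.eval (RingHom.id ℂ) z‖ ≤ C) ∧
     ∑ j, A j = 0)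
  crit_bounded : Bornology.IsBounded
    {z : ℂ | (∀ j, z ≠ pole j) ∧ ‖wDz f z‖ = ‖wDzbar f z‖}

/-- The critical set 𝒞 of a non-degenerate harmonic mapping. -/
def critSet (F : NondegenHM) : Set ℂ :=
  {z : ℂ | (∀ j, z ≠ F.pole j) ∧ ‖wDz F.f z‖ = ‖wDzbar F.f z‖}

/-- The caustics f(𝒞). -/
def caustics (F : NondegenHM) : Set ℂ := F.f '' critSet F

/-- The preimage of η under f, inside ℂ ∖ {poles}. -/
def preimg (F : NondegenHM) (η : ℂ) : Set ℂ :=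
  {z : ℂ | (∀ j, z ≠ F.pole j) ∧ F.f z = η}

/-!
Off the poles, `f = h + conj g` locally with `h' = r' + ∑ A_j / (z - z_j)` and
`g' = s' + ∑ conj A_j / (z - z_j)`, so `𝒞 = {|h'| = |g'|}` is relatively closed there and `f` is
continuous. If `(z - z_j)^n r → a` and `(z - z_j)^n s → b` at a pole, then
`(z - z_j)^(n+1) h' → -n a` and `(z - z_j)^(n+1) g' → -n b` (the logarithmic terms only contribute
a simple pole), so `|a| ≠ |b|` keeps a punctured neighbourhood of `z_j` free of `𝒞`. Hence `𝒞`
is closed and bounded, i.e. compact, and so is its continuous image `f(𝒞)`.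
-/

theorem wirtinger_of_eventuallyEq_add_conj {f H G : ℂ → ℂ} {z : ℂ}
    (hH : DifferentiableAt ℂ H z) (hG : DifferentiableAt ℂ G z)
    (hf : f =ᶠ[𝓝 z] fun w => H w + starRingEnd ℂ (G w)) :
    wDz f z = deriv H z ∧ wDzbar f z = starRingEnd ℂ (deriv G z) := by
  have hD : ∀ v, fderiv ℝ f z v = v * deriv H z + starRingEnd ℂ (v * deriv G z) := by
    intro v
    have h : HasFDerivAt (fun w => H w + starRingEnd ℂ (G w)) _ z :=
      (hH.hasDerivAt.hasFDerivAt.restrictScalars ℝ).add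
        (hG.hasDerivAt.hasFDerivAt.restrictScalars ℝ).star
    rw [hf.fderiv_eq, h.fderiv]
    simp
  simp only [wDz, wDzbar, hD, map_mul, Complex.conj_I, one_mul]
  constructor
  · linear_combination (starRingEnd ℂ (deriv G z) - deriv H z) / 2 * Complex.I_mul_I
  · linear_combination (deriv H z - starRingEnd ℂ (deriv G z)) / 2 * Complex.I_mul_I

theorem eventually_norm_ne_of_tendsto_mul {α 𝕜 : Type*} [NormedDivisionRing 𝕜] {l : Filter α}
    {w u v : α → 𝕜} {a b : 𝕜} (hu : Tendsto (fun x => w x * u x) l (𝓝 a))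
    (hv : Tendsto (fun x => w x * v x) l (𝓝 b)) (hab : ‖a‖ ≠ ‖b‖) :
    ∀ᶠ x in l, ‖u x‖ ≠ ‖v x‖ := by
  filter_upwards [(hu.norm.sub hv.norm).eventually_ne (sub_ne_zero.mpr hab)] with x hx huv
  simp [norm_mul, huv] at hx

theorem tendsto_sub_pow_succ_mul_deriv {R : ℂ → ℂ} {c a : ℂ} {n : ℕ}
    (hR : ∀ᶠ z in 𝓝[≠] c, DifferentiableAt ℂ R z)
    (h : Tendsto (fun z => (z - c) ^ n * R z) (𝓝[≠] c) (𝓝 a)) :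
    Tendsto (fun z => (z - c) ^ (n + 1) * deriv R z) (𝓝[≠] c) (𝓝 (-n * a)) := by
  set φ : ℂ → ℂ := fun z => (z - c) ^ n * R z
  set Φ := Function.update φ c a
  have hΦφ : ∀ z, z ≠ c → Φ =ᶠ[𝓝 z] φ := fun z hz => by
    filter_upwards [isOpen_ne.mem_nhds hz] with w hw using Function.update_of_ne hw _ _
  have hφ : ∀ᶠ z in 𝓝[≠] c,
      HasDerivAt φ (n * (z - c) ^ (n - 1) * 1 * R z + (z - c) ^ n * deriv R z) z := by
    filter_upwards [hR] with z hz using (((hasDerivAt_id z).sub_const c).pow n).mul hz.hasDerivAt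
  -- `c` is a removable singularity of `φ`, so `(z - c) Φ'(z) → 0`
  have hΦ : AnalyticAt ℂ Φ c :=
    Complex.analyticAt_of_differentiable_on_punctured_nhds_of_continuousAt
      (by filter_upwards [hφ, self_mem_nhdsWithin] with z hz hzc
          exact ((hΦφ z hzc).differentiableAt_iff).mpr hz.differentiableAt)
      (continuousAt_update_same.mpr h)
  have h0 : Tendsto (fun z => (z - c) * deriv Φ z) (𝓝[≠] c) (𝓝 0) := by
    have hc : ContinuousAt (fun z => (z - c) * deriv Φ z) c :=
      (continuous_sub_right c).continuousAt.mul hΦ.deriv.continuousAt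
    simpa using hc.tendsto.mono_left nhdsWithin_le_nhds
  have h1 : Tendsto (fun z => (z - c) * deriv Φ z - n * φ z) (𝓝[≠] c) (𝓝 (-n * a)) := by
    simpa using h0.sub (h.const_mul (n : ℂ))
  refine h1.congr' ?_
  filter_upwards [hφ, self_mem_nhdsWithin] with z hz hzc
  rw [(hΦφ z hzc).deriv_eq, hz.deriv]
  cases n
  · simp
  · simp [pow_succ]
    ring

theorem tendsto_sub_pow_succ_mul_div_sub (B p c : ℂ) {n : ℕ} (hn : n ≠ 0) :
    Tendsto (fun z => (z - c) ^ (n + 1) * (B / (z - p))) (𝓝[≠] c) (𝓝 0) := by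
  obtain rfl | hpc := eq_or_ne p c
  · have h : Tendsto (fun z => B * (z - p) ^ n) (𝓝 p) (𝓝 (B * (p - p) ^ n)) :=
      ((continuous_sub_right p).pow n).continuousAt.const_mul B |>.tendsto
    rw [sub_self, zero_pow hn, mul_zero] at h
    refine (h.mono_left nhdsWithin_le_nhds).congr' ?_
    filter_upwards [self_mem_nhdsWithin] with z hz
    rw [pow_succ]
    field_simp [sub_ne_zero.mpr hz]
  · have h : ContinuousAt (fun z => (z - c) ^ (n + 1) * (B / (z - p))) c :=
      ((continuous_sub_right c).pow _).continuousAt.mul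
        (continuousAt_const.div (continuous_sub_right p).continuousAt (sub_ne_zero.mpr hpc.symm))
    simpa using h.tendsto.mono_left nhdsWithin_le_nhds

theorem exists_hasDerivAt_re_eq_log_norm_sub {z p : ℂ} (hz : z ≠ p) :
    ∃ L : ℂ → ℂ, HasDerivAt L (z - p)⁻¹ z ∧ ∀ w, (L w).re = Real.log ‖w - p‖ := by
  have hzp : z - p ≠ 0 := sub_ne_zero.mpr hz
  set u : ℂ := (‖z - p‖ : ℂ) / (z - p)
  have hu : ‖u‖ = 1 := by simp [u, hzp]
  have huz : u * (z - p) ∈ Complex.slitPlane := by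
    simpa [u, div_mul_cancel₀ _ hzp] using norm_pos_iff.mpr hzp
  refine ⟨fun w => Complex.log (u * (w - p)), ?_, fun w => by simp [Complex.log_re, hu]⟩
  have h := (Complex.hasDerivAt_log huz).comp z (((hasDerivAt_id z).sub_const p).const_mul u)
  have hu0 : u ≠ 0 := norm_ne_zero_iff.mp (by simp [hu])
  exact h.congr_deriv (by field_simp)

theorem two_mul_mul_re_eq (A L : ℂ) :
    2 * A * (L.re : ℂ) = A * L + starRingEnd ℂ (starRingEnd ℂ A * L) := by
  rw [map_mul, Complex.conj_conj, ← mul_add, Complex.add_conj]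
  push_cast
  ring

namespace RatFunc

variable {𝕜 : Type*} [NontriviallyNormedField 𝕜] (r : RatFunc 𝕜)

theorem eval_id_apply (z : 𝕜) : r.eval (RingHom.id 𝕜) z = r.num.eval z / r.denom.eval z := rfl

theorem differentiableAt_eval {z : 𝕜} (hz : r.denom.eval z ≠ 0) :
    DifferentiableAt 𝕜 (fun w => r.eval (RingHom.id 𝕜) w) z := by
  simp only [eval_id_apply]
  exact (Polynomial.differentiableAt _).div (Polynomial.differentiableAt _) hz

theorem eventually_differentiableAt_eval (c : 𝕜) :
    ∀ᶠ z in 𝓝[≠] c, DifferentiableAt 𝕜 (fun w => r.eval (RingHom.id 𝕜) w) z := by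
  have hroots := Polynomial.finite_setOfPred_isRoot r.denom_ne_zero
  filter_upwards [nhdsNE_of_nhdsNE_sdiff_finite univ_mem hroots] with z hz
  exact r.differentiableAt_eval hz.2

theorem analyticAt_eval [CompleteSpace 𝕜] {z : 𝕜} (hz : r.denom.eval z ≠ 0) :
    AnalyticAt 𝕜 (fun w => r.eval (RingHom.id 𝕜) w) z := by
  simp only [eval_id_apply]
  exact (AnalyticOnNhd.eval_polynomial _ z trivial).div
    (AnalyticOnNhd.eval_polynomial _ z trivial) hz

end RatFunc

section RatLog

variable {m : ℕ} (r : RatFunc ℂ) (B p : Fin m → ℂ)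

/-- The derivative of the multivalued function `r + ∑ j, B j * log (z - p j)`. -/
def ratLogDeriv (z : ℂ) : ℂ :=
  deriv (fun w => r.eval (RingHom.id ℂ) w) z + ∑ j, B j / (z - p j)

variable {r B p}

theorem continuousAt_ratLogDeriv {z : ℂ} (hr : r.denom.eval z ≠ 0) (hp : ∀ j, z ≠ p j) :
    ContinuousAt (ratLogDeriv r B p) z :=
  (r.analyticAt_eval hr).deriv.continuousAt.add <| tendsto_finsetSum _ fun j _ =>
    continuousAt_const.div (continuous_sub_right _).continuousAt (sub_ne_zero.mpr (hp j))

theorem hasDerivAt_ratLog {L : Fin m → ℂ → ℂ} {z : ℂ} (hr : r.denom.eval z ≠ 0)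
    (hL : ∀ j, HasDerivAt (L j) (z - p j)⁻¹ z) :
    HasDerivAt (fun w => r.eval (RingHom.id ℂ) w + ∑ j, B j * L j w) (ratLogDeriv r B p z) z :=
  (r.differentiableAt_eval hr).hasDerivAt.add <|
    (HasDerivAt.fun_sum fun j _ => (hL j).const_mul (B j)).congr_deriv (by simp [div_eq_mul_inv])

theorem tendsto_sub_pow_succ_mul_ratLogDeriv {c a : ℂ} {n : ℕ} (hn : n ≠ 0)
    (h : Tendsto (fun z => (z - c) ^ n * r.eval (RingHom.id ℂ) z) (𝓝[≠] c) (𝓝 a)) :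
    Tendsto (fun z => (z - c) ^ (n + 1) * ratLogDeriv r B p z) (𝓝[≠] c) (𝓝 (-n * a)) := by
  have hlog := tendsto_finsetSum Finset.univ fun j _ =>
    tendsto_sub_pow_succ_mul_div_sub (B j) (p j) c hn
  simpa [ratLogDeriv, mul_add, Finset.mul_sum] using
    (tendsto_sub_pow_succ_mul_deriv (r.eventually_differentiableAt_eval c) h).add hlog

end RatLog

namespace NondegenHM

variable (F : NondegenHM)

/-- `h'` and `g'` for the local decomposition `f = h + conj g`, obtained from
`2 A log |z - z_j| = A log (z - z_j) + conj (conj A log (z - z_j))`. -/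
def hDeriv : ℂ → ℂ := ratLogDeriv F.r F.A F.pole

def gDeriv : ℂ → ℂ := ratLogDeriv F.s (fun j => starRingEnd ℂ (F.A j)) F.pole

variable {F}

theorem eval_denom_r_ne_zero {z : ℂ} (hz : ∀ j, z ≠ F.pole j) : F.r.denom.eval z ≠ 0 :=
  fun h => let ⟨j, hj⟩ := F.r_poles z h; hz j hj

theorem eval_denom_s_ne_zero {z : ℂ} (hz : ∀ j, z ≠ F.pole j) : F.s.denom.eval z ≠ 0 :=
  fun h => let ⟨j, hj⟩ := F.s_poles z h; hz j hj

theorem exists_eventuallyEq_add_conj {z : ℂ} (hz : ∀ j, z ≠ F.pole j) :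
    ∃ H G : ℂ → ℂ, HasDerivAt H (F.hDeriv z) z ∧ HasDerivAt G (F.gDeriv z) z ∧
      F.f =ᶠ[𝓝 z] fun w => H w + starRingEnd ℂ (G w) := by
  choose L hL hre using fun j => exists_hasDerivAt_re_eq_log_norm_sub (hz j)
  refine ⟨_, _, hasDerivAt_ratLog (eval_denom_r_ne_zero hz) hL,
    hasDerivAt_ratLog (eval_denom_s_ne_zero hz) hL, ?_⟩
  filter_upwards [eventually_all.mpr fun j => eventually_ne_nhds (hz j)] with w hw
  simp only [F.f_eq w hw, ← hre, two_mul_mul_re_eq, Finset.sum_add_distrib, map_add, map_sum]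
  ring

theorem wDz_eq_hDeriv {z : ℂ} (hz : ∀ j, z ≠ F.pole j) : wDz F.f z = F.hDeriv z := by
  obtain ⟨H, G, hH, hG, hf⟩ := exists_eventuallyEq_add_conj hz
  rw [(wirtinger_of_eventuallyEq_add_conj hH.differentiableAt hG.differentiableAt hf).1, hH.deriv]

theorem wDzbar_eq_conj_gDeriv {z : ℂ} (hz : ∀ j, z ≠ F.pole j) :
    wDzbar F.f z = starRingEnd ℂ (F.gDeriv z) := by
  obtain ⟨H, G, hH, hG, hf⟩ := exists_eventuallyEq_add_conj hz
  rw [(wirtinger_of_eventuallyEq_add_conj hH.differentiableAt hG.differentiableAt hf).2, hG.deriv]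

theorem continuousAt_f {z : ℂ} (hz : ∀ j, z ≠ F.pole j) : ContinuousAt F.f z := by
  obtain ⟨H, G, hH, hG, hf⟩ := exists_eventuallyEq_add_conj hz
  exact (hH.continuousAt.add (Complex.continuous_conj.continuousAt.comp hG.continuousAt)).congr
    hf.symm

theorem mem_critSet_iff {z : ℂ} :
    z ∈ critSet F ↔ (∀ j, z ≠ F.pole j) ∧ ‖F.hDeriv z‖ = ‖F.gDeriv z‖ := by
  refine and_congr_right fun hz => ?_
  rw [wDz_eq_hDeriv hz, wDzbar_eq_conj_gDeriv hz, Complex.norm_conj]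

theorem eventually_notMem_critSet_nhdsNE_pole (j : Fin F.m) :
    ∀ᶠ z in 𝓝[≠] F.pole j, z ∉ critSet F := by
  obtain ⟨n, hn, a, b, hab, hr, hs⟩ := F.pole_cond j
  have hn0 : n ≠ 0 := Nat.one_le_iff_ne_zero.mp hn
  have hne : ‖-(n : ℂ) * a‖ ≠ ‖-(n : ℂ) * b‖ := by
    simpa [norm_mul, hn0] using hab
  filter_upwards [eventually_norm_ne_of_tendsto_mul
    (tendsto_sub_pow_succ_mul_ratLogDeriv (B := F.A) (p := F.pole) hn0 hr)
    (tendsto_sub_pow_succ_mul_ratLogDeriv (p := F.pole) hn0 hs) hne] with z hz hcrit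
  exact hz (mem_critSet_iff.mp hcrit).2

theorem isClosed_critSet : IsClosed (critSet F) := by
  refine isOpen_compl_iff.mp (isOpen_iff_mem_nhds.mpr fun x hx => ?_)
  by_cases hxp : ∃ j, x = F.pole j
  · obtain ⟨j, rfl⟩ := hxp
    rw [← nhdsNE_sup_pure]
    exact ⟨eventually_notMem_critSet_nhdsNE_pole j, hx⟩
  · have hxp : ∀ j, x ≠ F.pole j := fun j h => hxp ⟨j, h⟩
    have hne : ‖F.hDeriv x‖ ≠ ‖F.gDeriv x‖ := fun h => hx (mem_critSet_iff.mpr ⟨hxp, h⟩)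
    have hh : ContinuousAt F.hDeriv x :=
      continuousAt_ratLogDeriv (eval_denom_r_ne_zero hxp) hxp
    have hg : ContinuousAt F.gDeriv x :=
      continuousAt_ratLogDeriv (eval_denom_s_ne_zero hxp) hxp
    filter_upwards [(hh.norm.sub hg.norm).eventually_ne (sub_ne_zero.mpr hne)] with z hz hcrit
    exact hz (sub_eq_zero.mpr (mem_critSet_iff.mp hcrit).2)

theorem isCompact_critSet : IsCompact (critSet F) :=
  Metric.isCompact_of_isClosed_isBounded isClosed_critSet F.crit_bounded

end NondegenHM

/-- The critical set and the caustics of a non-degenerate harmonic mapping are compact,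
and no pole is an accumulation point of the critical set. -/
theorem critSet_caustics_compact (F : NondegenHM) :
    IsCompact (critSet F) ∧ IsCompact (caustics F) ∧
    ∀ j, ¬ AccPt (F.pole j) (Filter.principal (critSet F)) := by
  refine ⟨F.isCompact_critSet, F.isCompact_critSet.image_of_continuousOn
    fun z hz => (F.continuousAt_f hz.1).continuousWithinAt, fun j hacc => ?_⟩
  exact accPt_iff_frequently_nhdsNE.mp hacc (F.eventually_notMem_critSet_nhdsNE_pole j)
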